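/- arXiv:2310.06756 — 2 statements merged into one kernel-verified Lean document; each statement's English description precedes it below -/
import Mathlib

section
/- Let W_a, W_b be m×n real matrices and z_a, z_b vectors in ℝ^n. If for all α ∈ [0,1], (α•W_a + (1-α)•W_b) * (α•z_a + (1-α)•z_b) = α•(W_a * z_a) + (1-α)•(W_b * z_b), then (W_a - W_b) * (z_a - z_b) = 0. -/
theorem stmt_0 {m n : ℕ} (Wa Wb : Matrix (Fin m) (Fin n) ℝ) (za zb : Fin n → ℝ)
    (h : ∀ α : ℝ, α ∈ Set.Icc (0:ℝ) 1 →
      (α • Wa + (1 - α) • Wb).mulVec (α • za + (1 - α) • zb)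
        = α • Wa.mulVec za + (1 - α) • Wb.mulVec zb) :
    (Wa - Wb).mulVec (za - zb) = 0 := by
  have h2 := h (1/2) (by constructor <;> norm_num)
  have key : ∀ v, (Wa - Wb).mulVec (za - zb) v = 0 := by
    intro v
    have := congrFun h2 v
    simp [Matrix.add_mulVec, Matrix.sub_mulVec, Matrix.mulVec_add, Matrix.mulVec_sub,
      Matrix.smul_mulVec, Matrix.mulVec_smul] at this ⊢
    linarith
  funext v; exact key v
end

section
/- Consider a two-layer linear map x ↦ W₂ * (W₁ * x) with W₁ : Matrix (Fin d) (Fin n) ℝ and W₂ : Matrix (Fin m) (Fin d) ℝ. Suppose two hidden rows coincide: row i of W₁ equals row j of W₁, for i ≠ j. Define merged matrices W₁' (delete row j) and W₂' where column i of W₂' is (column i of W₂) + (column j of W₂) and other columns (except the deleted j) unchanged. Then for all x ∈ ℝ^n, W₂ * (W₁ * x) = W₂' * (W₁' * x). -/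
theorem stmt_8 {n m d : ℕ} (W₁ : Matrix (Fin (d + 1)) (Fin n) ℝ)
    (W₂ : Matrix (Fin m) (Fin (d + 1)) ℝ)
    (i j : Fin (d + 1)) (hij : i ≠ j) (hrow : W₁ i = W₁ j)
    (W₁' : Matrix (Fin d) (Fin n) ℝ) (hW₁' : ∀ k, W₁' k = W₁ (j.succAbove k))
    (W₂' : Matrix (Fin m) (Fin d) ℝ)
    (hW₂' : ∀ r k, W₂' r k =
      if j.succAbove k = i then W₂ r i + W₂ r j else W₂ r (j.succAbove k)) :
    ∀ x : Fin n → ℝ, W₂.mulVec (W₁.mulVec x) = W₂'.mulVec (W₁'.mulVec x) := by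
  intro x
  funext r
  obtain ⟨k₀, hk₀⟩ := Fin.exists_succAbove_eq hij
  set S : Fin (d + 1) → ℝ := fun t => W₁.mulVec x t with hS
  have hSij : S i = S j := by
    simp only [hS, Matrix.mulVec, dotProduct, hrow]
  have hL : W₂.mulVec (W₁.mulVec x) r = ∑ k : Fin (d + 1), W₂ r k * S k := rfl
  have hR : W₂'.mulVec (W₁'.mulVec x) r
      = ∑ k : Fin d, W₂' r k * S (j.succAbove k) := by
    simp only [Matrix.mulVec, dotProduct, hW₁', hS]
  rw [hL, hR, Fin.sum_univ_succAbove (fun k => W₂ r k * S k) j]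
  have key : ∀ k : Fin d,
      W₂' r k * S (j.succAbove k)
      = W₂ r (j.succAbove k) * S (j.succAbove k)
        + (if k = k₀ then W₂ r j * S i else 0) := by
    intro k
    rw [hW₂']
    by_cases h : k = k₀
    · subst h; rw [hk₀]; simp [add_mul]
    · have hne : j.succAbove k ≠ i := by
        rw [← hk₀]; exact fun hh => h (Fin.succAbove_right_injective hh)
      simp [hne, h]
  rw [Finset.sum_congr rfl fun k _ => key k, Finset.sum_add_distrib,
    Finset.sum_ite_eq' Finset.univ k₀]
  simp [hSij]
  ring
end
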